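/- For positive integers i, k and parameter z, q with denominators nonzero: ∑_{i ≥ i_1 ≥ ... ≥ i_k ≥ 1} (zq^{-k};q)_{i_k} ∏_{j=1}^k q^{i_j}/(1-q^{i_j}) = ∑_{r=1}^i [i choose r]_q (-1)^{r-1} q^{binom(r,2) + rk} (1 - z^r q^{-rk})/(1-q^r)^k. -/

import Mathlib

noncomputable def qPoch (q a : ℝ) (n : ℕ) : ℝ := ∏ j ∈ Finset.range n, (1 - a * q ^ j)

noncomputable def qBinom (q : ℝ) (n r : ℕ) : ℝ :=
  if r ≤ n then qPoch q q n / (qPoch q q r * qPoch q q (n - r)) else 0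

/-- Sum over chains `top ≥ i₁ ≥ ⋯ ≥ i_m ≥ 1` of `(z q^{-k};q)_{i_m} ∏ q^{i_j}/(1-q^{i_j})`. -/
noncomputable def chainSum (q z : ℝ) (k : ℕ) : ℕ → ℕ → ℝ
  | 0, top => qPoch q (z * q ^ (-(k : ℤ))) top
  | m + 1, top => ∑ i ∈ Finset.Icc 1 top, q ^ i / (1 - q ^ i) * chainSum q z k m i

/-!
The q-binomial theorem, together with `(1;q)_n = 0`, expands the innermost factor as
`(a;q)_n = ∑_{r=1}^n [n,r]_q (-1)^(r-1) q^(r choose 2) (1 - a^r)`. By the q-analogue of the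
hockey-stick identity, `∑_{i=1}^N q^i/(1-q^i) [i,r]_q = q^r/(1-q^r) [N,r]_q`, summing such an
expansion against the weight `q^i/(1-q^i)` only multiplies its `r`-th coefficient by
`q^r/(1-q^r)`. After the `k` summations of the chain one is left with the right-hand side,
for `a = z q^(-k)`.
-/

open Finset

section

variable {q : ℝ}

theorem qPoch_zero (a : ℝ) : qPoch q a 0 = 1 :=
  prod_range_zero _

theorem qPoch_succ (a : ℝ) (n : ℕ) : qPoch q a (n + 1) = qPoch q a n * (1 - a * q ^ n) :=
  prod_range_succ _ _

theorem qPoch_self_succ (n : ℕ) : qPoch q q (n + 1) = qPoch q q n * (1 - q ^ (n + 1)) := by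
  rw [qPoch_succ, pow_succ']

theorem qPoch_one {n : ℕ} (hn : 1 ≤ n) : qPoch q 1 n = 0 :=
  prod_eq_zero (mem_range.mpr hn) (by simp)

theorem qPoch_self_ne_zero (hq : ∀ j : ℕ, 1 ≤ j → 1 - q ^ j ≠ 0) (n : ℕ) : qPoch q q n ≠ 0 := by
  induction n with
  | zero => simp [qPoch]
  | succ n ih => rw [qPoch_self_succ]; exact mul_ne_zero ih (hq _ n.succ_pos)

theorem qBinom_of_lt {n r : ℕ} (h : n < r) : qBinom q n r = 0 := by
  simp [qBinom, h]

theorem qBinom_zero_right (hq : ∀ j : ℕ, 1 ≤ j → 1 - q ^ j ≠ 0) (n : ℕ) : qBinom q n 0 = 1 := by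
  simp [qBinom, qPoch_zero, qPoch_self_ne_zero hq]

theorem qBinom_self (hq : ∀ j : ℕ, 1 ≤ j → 1 - q ^ j ≠ 0) (n : ℕ) : qBinom q n n = 1 := by
  simp [qBinom, qPoch_zero, qPoch_self_ne_zero hq]

theorem qBinom_succ_succ (hq : ∀ j : ℕ, 1 ≤ j → 1 - q ^ j ≠ 0) (n r : ℕ) :
    qBinom q (n + 1) (r + 1) = qBinom q n (r + 1) + q ^ (n - r) * qBinom q n r := by
  rcases lt_trichotomy r n with h | rfl | h
  · obtain ⟨s, rfl⟩ := Nat.exists_eq_add_of_lt h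
    simp only [qBinom, if_pos (by omega : r + 1 ≤ r + s + 1 + 1),
      if_pos (by omega : r + 1 ≤ r + s + 1), if_pos (by omega : r ≤ r + s + 1),
      show r + s + 1 + 1 - (r + 1) = s + 1 by omega,
      show r + s + 1 - (r + 1) = s by omega, show r + s + 1 - r = s + 1 by omega,
      qPoch_self_succ (r + s + 1), qPoch_self_succ r, qPoch_self_succ s]
    have := qPoch_self_ne_zero hq r
    have := qPoch_self_ne_zero hq s
    have := hq (r + 1) (by omega)
    have := hq (s + 1) (by omega)
    field_simp
    ring
  · simp [qBinom_self hq, qBinom_of_lt (Nat.lt_succ_self r)]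
  · simp [qBinom_of_lt h, qBinom_of_lt (by omega : n < r + 1),
      qBinom_of_lt (by omega : n + 1 < r + 1)]

theorem qBinom_succ_succ_mul (hq : ∀ j : ℕ, 1 ≤ j → 1 - q ^ j ≠ 0) (n r : ℕ) :
    (1 - q ^ (r + 1)) * qBinom q (n + 1) (r + 1) = (1 - q ^ (n + 1)) * qBinom q n r := by
  rcases le_or_gt r n with h | h
  · simp only [qBinom, if_pos h, if_pos (Nat.succ_le_succ h), Nat.add_sub_add_right,
      qPoch_self_succ]
    have := qPoch_self_ne_zero hq r
    have := hq (r + 1) (by omega)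
    field_simp
  · simp [qBinom_of_lt h, qBinom_of_lt (Nat.succ_lt_succ h)]

theorem qPoch_eq_sum_range (hq : ∀ j : ℕ, 1 ≤ j → 1 - q ^ j ≠ 0) (a : ℝ) (n : ℕ) :
    qPoch q a n = ∑ r ∈ range (n + 1), qBinom q n r * (-1) ^ r * q ^ r.choose 2 * a ^ r := by
  induction n with
  | zero => simp [qPoch_zero, qBinom_zero_right hq]
  | succ n ih =>
    have hshift : ∀ r ∈ range (n + 1),
        q ^ (n - r) * qBinom q n r * (-1) ^ (r + 1) * q ^ (r + 1).choose 2 * a ^ (r + 1) =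
          -(a * q ^ n) * (qBinom q n r * (-1) ^ r * q ^ r.choose 2 * a ^ r) := by
      intro r hr
      have hpow : q ^ (n - r) * q ^ r = q ^ n :=
        pow_sub_mul_pow q (by simpa [Nat.lt_succ_iff] using hr)
      rw [Nat.choose_succ_succ', Nat.choose_one_right, pow_add, pow_succ, pow_succ]
      linear_combination (-(qBinom q n r * (-1) ^ r * q ^ r.choose 2 * a ^ r * a)) * hpow
    calc qPoch q a (n + 1) = qPoch q a n - a * q ^ n * qPoch q a n := by rw [qPoch_succ]; ring
      _ = ∑ r ∈ range (n + 2), qBinom q n r * (-1) ^ r * q ^ r.choose 2 * a ^ r +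
          ∑ r ∈ range (n + 1),
            q ^ (n - r) * qBinom q n r * (-1) ^ (r + 1) * q ^ (r + 1).choose 2 * a ^ (r + 1) := by
        rw [sum_range_succ _ (n + 1), qBinom_of_lt n.lt_succ_self, sum_congr rfl hshift,
          ← mul_sum, ← ih]
        ring
      _ = ∑ r ∈ range (n + 2), qBinom q (n + 1) r * (-1) ^ r * q ^ r.choose 2 * a ^ r := by
        rw [sum_range_succ' _ (n + 1), sum_range_succ' _ (n + 1), qBinom_zero_right hq,
          qBinom_zero_right hq, add_right_comm, ← sum_add_distrib]
        congr 1
        refine sum_congr rfl fun r _ => ?_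
        rw [qBinom_succ_succ hq]
        ring

theorem qPoch_eq_sum_Icc (hq : ∀ j : ℕ, 1 ≤ j → 1 - q ^ j ≠ 0) (a : ℝ) {n : ℕ} (hn : 1 ≤ n) :
    qPoch q a n = ∑ r ∈ Icc 1 n, qBinom q n r * (-1) ^ (r - 1) * q ^ r.choose 2 * (1 - a ^ r) := by
  calc qPoch q a n = qPoch q a n - qPoch q 1 n := by rw [qPoch_one hn, sub_zero]
    _ = ∑ r ∈ Icc 0 n, qBinom q n r * (-1) ^ r * q ^ r.choose 2 * (a ^ r - 1) := by
      rw [qPoch_eq_sum_range hq a, qPoch_eq_sum_range hq 1, ← sum_sub_distrib,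
        Nat.range_succ_eq_Icc_zero]
      exact sum_congr rfl fun r _ => by ring
    _ = _ := by
      rw [← insert_Icc_add_one_left_eq_Icc n.zero_le, sum_insert (by simp)]
      simp only [pow_zero, sub_self, mul_zero, zero_add]
      refine sum_congr rfl fun r hr => ?_
      obtain ⟨s, rfl⟩ : ∃ s, r = s + 1 := ⟨r - 1, by simp at hr; omega⟩
      rw [Nat.add_sub_cancel, pow_succ]
      ring

theorem sum_Icc_mul_qBinom (hq : ∀ j : ℕ, 1 ≤ j → 1 - q ^ j ≠ 0) {r : ℕ} (hr : 1 ≤ r) (N : ℕ) :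
    ∑ i ∈ Icc 1 N, q ^ i / (1 - q ^ i) * qBinom q i r = q ^ r / (1 - q ^ r) * qBinom q N r := by
  induction N with
  | zero => simp [qBinom_of_lt hr]
  | succ N ih =>
    obtain ⟨s, rfl⟩ := Nat.exists_eq_add_of_le' hr
    rw [sum_Icc_succ_top (by omega), ih]
    rcases le_or_gt s N with h | h
    · have habsorb : qBinom q (N + 1) (s + 1) / (1 - q ^ (N + 1)) =
          qBinom q N s / (1 - q ^ (s + 1)) := by
        rw [div_eq_div_iff (hq (N + 1) (by omega)) (hq (s + 1) (by omega))]
        linear_combination qBinom_succ_succ_mul hq N s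
      calc q ^ (s + 1) / (1 - q ^ (s + 1)) * qBinom q N (s + 1) +
            q ^ (N + 1) / (1 - q ^ (N + 1)) * qBinom q (N + 1) (s + 1)
          = q ^ (s + 1) / (1 - q ^ (s + 1)) * qBinom q N (s + 1) +
            q ^ (N + 1) * (qBinom q (N + 1) (s + 1) / (1 - q ^ (N + 1))) := by ring
        _ = q ^ (s + 1) / (1 - q ^ (s + 1)) * qBinom q N (s + 1) +
            q ^ (N - s) * q ^ (s + 1) * (qBinom q N s / (1 - q ^ (s + 1))) := by
          rw [habsorb, ← pow_add, show N - s + (s + 1) = N + 1 by omega]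
        _ = q ^ (s + 1) / (1 - q ^ (s + 1)) * qBinom q (N + 1) (s + 1) := by
          rw [qBinom_succ_succ hq]; ring
    · simp [qBinom_of_lt (by omega : N < s + 1), qBinom_of_lt (by omega : N + 1 < s + 1)]

theorem sum_Icc_weight_mul_sum_qBinom (hq : ∀ j : ℕ, 1 ≤ j → 1 - q ^ j ≠ 0) (c : ℕ → ℝ)
    (N : ℕ) :
    ∑ i ∈ Icc 1 N, q ^ i / (1 - q ^ i) * ∑ r ∈ Icc 1 i, qBinom q i r * c r =
      ∑ r ∈ Icc 1 N, qBinom q N r * c r * (q ^ r / (1 - q ^ r)) := by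
  calc ∑ i ∈ Icc 1 N, q ^ i / (1 - q ^ i) * ∑ r ∈ Icc 1 i, qBinom q i r * c r
    _ = ∑ i ∈ Icc 1 N, ∑ r ∈ Icc 1 N, q ^ i / (1 - q ^ i) * (qBinom q i r * c r) := by
        refine sum_congr rfl fun i hi => ?_
        rw [mul_sum]
        refine sum_subset (Icc_subset_Icc_right (mem_Icc.mp hi).2) fun r hr hr' => ?_
        rw [qBinom_of_lt (by simp only [mem_Icc] at hr hr'; omega), zero_mul, mul_zero]
    _ = ∑ r ∈ Icc 1 N, (∑ i ∈ Icc 1 N, q ^ i / (1 - q ^ i) * qBinom q i r) * c r := by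
        rw [sum_comm]
        simp_rw [sum_mul, mul_assoc]
    _ = _ := sum_congr rfl fun r hr => by rw [sum_Icc_mul_qBinom hq (mem_Icc.mp hr).1]; ring

theorem chainSum_eq_sum_qBinom (hq : ∀ j : ℕ, 1 ≤ j → 1 - q ^ j ≠ 0) (z : ℝ) (k m : ℕ)
    {top : ℕ} (htop : 1 ≤ top) :
    chainSum q z k m top = ∑ r ∈ Icc 1 top, qBinom q top r * ((-1) ^ (r - 1) * q ^ r.choose 2 *
      (1 - (z * q ^ (-(k : ℤ))) ^ r) * (q ^ r / (1 - q ^ r)) ^ m) := by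
  induction m generalizing top with
  | zero =>
    simp only [chainSum, qPoch_eq_sum_Icc hq _ htop, pow_zero, mul_one, mul_assoc]
  | succ m ih =>
    rw [chainSum, sum_congr rfl fun i hi => by rw [ih (mem_Icc.mp hi).1],
      sum_Icc_weight_mul_sum_qBinom hq]
    exact sum_congr rfl fun r _ => by ring

end

theorem eq45_general (q z : ℝ) (i k : ℕ) (hi : 0 < i)
    (hden1 : ∀ j : ℕ, 1 ≤ j → 1 - q ^ j ≠ 0) :
    chainSum q z k k i =
      ∑ r ∈ Finset.Icc 1 i,
        qBinom q i r * (-1) ^ (r - 1) * q ^ (r * (r - 1) / 2 + r * k) *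
          (1 - z ^ r * q ^ (-((r : ℤ) * k))) / (1 - q ^ r) ^ k := by
  rw [chainSum_eq_sum_qBinom hden1 z k k hi]
  refine sum_congr rfl fun r _ => ?_
  rw [Nat.choose_two_right, mul_pow z, ← zpow_natCast (q ^ _), ← zpow_mul, neg_mul,
    mul_comm (k : ℤ), div_pow, ← pow_mul, pow_add]
  ring

/-- The specialization (4.5) of the Fu–Lascoux identity. -/
theorem eq45 (q z : ℝ) (i k : ℕ) (hi : 0 < i) (hk : 0 < k) (hq : q ≠ 0)
    (hden1 : ∀ j : ℕ, 1 ≤ j → 1 - q ^ j ≠ 0) :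
    chainSum q z k k i =
      ∑ r ∈ Finset.Icc 1 i,
        qBinom q i r * (-1) ^ (r - 1) * q ^ (r * (r - 1) / 2 + r * k) *
          (1 - z ^ r * q ^ (-((r : ℤ) * k))) / (1 - q ^ r) ^ k :=
  eq45_general q z i k hi hden1
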